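/- (Keller–Osserman bound.) Let μ, s ∈ ℝ and p > 1, and let (d, c) be a regularized distance on Ω. If u is a sub-solution of (*) on Ω_ρ for some ρ > 0, then for every ρ' ∈ (0, ρ) there exists γ* > 0 (depending on u) such that u(x) ≤ γ*·δ(x)^{(s−2)/(p−1)} for all x ∈ Ω_{ρ'}. If moreover u is a sub-solution of (*) on all of Ω, then there exists γ* depending only on N, p, s, μ and c (independent of u) such that u(x) ≤ γ*·δ(x)^{(s−2)/(p−1)} for all x ∈ Ω. -/

import Mathlib

open Set Metric MeasureTheory Real

noncomputable section

/-- Distance to the boundary of `Ω`. -/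
def bdist {N : ℕ} (Ω : Set (EuclideanSpace ℝ (Fin N))) (x : EuclideanSpace ℝ (Fin N)) : ℝ :=
  Metric.infDist x Ωᶜ

/-- The collar `Ω_ρ = {x ∈ Ω : δ(x) < ρ}`. -/
def collar {N : ℕ} (Ω : Set (EuclideanSpace ℝ (Fin N))) (ρ : ℝ) :
    Set (EuclideanSpace ℝ (Fin N)) :=
  {x ∈ Ω | bdist Ω x < ρ}

/-- The ring `Ω_{ε,ρ} = {x ∈ Ω : ε < δ(x) < ρ}`. -/
def ring' {N : ℕ} (Ω : Set (EuclideanSpace ℝ (Fin N))) (ε ρ : ℝ) :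
    Set (EuclideanSpace ℝ (Fin N)) :=
  {x ∈ Ω | ε < bdist Ω x ∧ bdist Ω x < ρ}

/-- The Laplacian. -/
def lap {N : ℕ} (f : EuclideanSpace ℝ (Fin N) → ℝ) (x : EuclideanSpace ℝ (Fin N)) : ℝ :=
  ∑ i : Fin N, fderiv ℝ (fun y => fderiv ℝ f y (EuclideanSpace.single i 1)) x
    (EuclideanSpace.single i 1)

/-- `ρ₀` is a good collar width: `δ` is `C²` on `Ω_{ρ₀}`, `|∇δ| = 1` there, `Δδ` bounded. -/
def GoodCollar {N : ℕ} (Ω : Set (EuclideanSpace ℝ (Fin N))) (ρ₀ : ℝ) : Prop :=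
  0 < ρ₀ ∧ ContDiffOn ℝ 2 (bdist Ω) (collar Ω ρ₀) ∧
    (∀ x ∈ collar Ω ρ₀, ‖gradient (bdist Ω) x‖ = 1) ∧
    ∃ M, ∀ x ∈ collar Ω ρ₀, |lap (bdist Ω) x| ≤ M

/-- A super-harmonic of `L_μ = -Δ - μ/δ²` on `G`. -/
def SuperHarm {N : ℕ} (Ω : Set (EuclideanSpace ℝ (Fin N))) (μ : ℝ)
    (G : Set (EuclideanSpace ℝ (Fin N))) (h : EuclideanSpace ℝ (Fin N) → ℝ) : Prop :=
  ContDiffOn ℝ 2 h G ∧ ∀ x ∈ G, 0 ≤ -(lap h x) - μ / (bdist Ω x) ^ 2 * h x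

/-- A sub-harmonic of `L_μ = -Δ - μ/δ²` on `G`. -/
def SubHarm {N : ℕ} (Ω : Set (EuclideanSpace ℝ (Fin N))) (μ : ℝ)
    (G : Set (EuclideanSpace ℝ (Fin N))) (h : EuclideanSpace ℝ (Fin N) → ℝ) : Prop :=
  ContDiffOn ℝ 2 h G ∧ ∀ x ∈ G, -(lap h x) - μ / (bdist Ω x) ^ 2 * h x ≤ 0

/-- A positive local super-harmonic of `L_μ`, defined on the collar `Ω_σ`. -/
def PosSuperHarmOn {N : ℕ} (Ω : Set (EuclideanSpace ℝ (Fin N))) (μ σ : ℝ)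
    (h : EuclideanSpace ℝ (Fin N) → ℝ) : Prop :=
  SuperHarm Ω μ (collar Ω σ) h ∧ ∀ x ∈ collar Ω σ, 0 < h x

/-- A sub-solution of `(*)`: `-Δu - (μ/δ²)u + u^p/δ^s = 0` on `G`. -/
def SubSol {N : ℕ} (Ω : Set (EuclideanSpace ℝ (Fin N))) (μ s p : ℝ)
    (G : Set (EuclideanSpace ℝ (Fin N))) (u : EuclideanSpace ℝ (Fin N) → ℝ) : Prop :=
  ContDiffOn ℝ 2 u G ∧ (∀ x ∈ G, 0 ≤ u x) ∧
    ∀ x ∈ G, -(lap u x) - μ / (bdist Ω x) ^ 2 * u x + (u x) ^ p / (bdist Ω x) ^ s ≤ 0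

/-- A super-solution of `(*)` on `G`. -/
def SuperSol {N : ℕ} (Ω : Set (EuclideanSpace ℝ (Fin N))) (μ s p : ℝ)
    (G : Set (EuclideanSpace ℝ (Fin N))) (u : EuclideanSpace ℝ (Fin N) → ℝ) : Prop :=
  ContDiffOn ℝ 2 u G ∧ (∀ x ∈ G, 0 < u x) ∧
    ∀ x ∈ G, 0 ≤ -(lap u x) - μ / (bdist Ω x) ^ 2 * u x + (u x) ^ p / (bdist Ω x) ^ s

/-- A regularized distance `(d, c)` on `Ω`. -/
def RegDist {N : ℕ} (Ω : Set (EuclideanSpace ℝ (Fin N))) (d : EuclideanSpace ℝ (Fin N) → ℝ)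
    (c : ℝ) : Prop :=
  1 ≤ c ∧ ContDiffOn ℝ 2 d Ω ∧ (∀ x ∈ Ω, 0 < d x) ∧
    (∀ x ∈ Ω, c⁻¹ * bdist Ω x ≤ d x ∧ d x ≤ c * bdist Ω x) ∧
    (∀ x ∈ Ω, ‖gradient d x‖ ≤ c) ∧ (∀ x ∈ Ω, |lap d x| ≤ c / d x)

/-
Fix `x₀ ∈ Ω`, put `r = δ(x₀)` and work on the ball `B = B(x₀, t r)` with `t ≤ 1/2`. There
`r/2 ≤ δ ≤ 3r/2`, so a sub-solution satisfies the reduced inequality `Δu ≥ A u^p - B u` with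
`A ≍ r^{-s}` and `B ≍ |μ| r^{-2}`. Compare `u` with the explosive barrier
`V = L (R² / (R² - |y - x₀|²))^β`, `R = t r`, `β (p - 1) ≥ 2`: a direct computation gives
`ΔV < A v^p - B v` whenever `v > V`, once `A L^{p-1} = C(N, β)/R² + B`. Since `V` blows up on
`∂B`, if `u(x₀) > V(x₀)` then `u - V` has a positive interior maximum, where `Δu ≤ ΔV` contradicts
the two inequalities. Hence `u(x₀) ≤ V(x₀) = L ≍ r^{(s-2)/(p-1)}`, with a constant depending only
on `N, p, s, μ, t`.
-/

open Filter Topology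

theorem IsLocalMax.deriv_deriv_nonpos {f : ℝ → ℝ} {x : ℝ} (h : IsLocalMax f x)
    (hc : ContinuousAt f x) : deriv (deriv f) x ≤ 0 := by
  by_contra! hpos
  have hmin : IsLocalMin f x := isLocalMin_of_deriv_deriv_pos hpos h.deriv_eq_zero hc
  have hconst : f =ᶠ[𝓝 x] fun _ => f x := (h.and hmin).mono fun y hy => le_antisymm hy.1 hy.2
  have hderiv : deriv f =ᶠ[𝓝 x] fun _ => 0 :=
    hconst.eventuallyEq_nhds.mono fun y hy => by rw [hy.deriv_eq, deriv_const]
  rw [hderiv.deriv_eq, deriv_const] at hpos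
  exact lt_irrefl _ hpos

section LineDeriv

variable {F G : Type*} [NormedAddCommGroup F] [NormedSpace ℝ F] [NormedAddCommGroup G]
  [NormedSpace ℝ G]

theorem hasDerivAt_line (z e : F) (t : ℝ) : HasDerivAt (fun t : ℝ => z + t • e) e t := by
  simpa using ((hasDerivAt_id t).smul_const e).const_add z

theorem ContDiffAt.differentiableAt_fderiv_apply {f : F → G} {z : F}
    (hf : ContDiffAt ℝ 2 f z) (e : F) : DifferentiableAt ℝ (fun y => fderiv ℝ f y e) z :=
  (ContinuousLinearMap.apply ℝ G e).differentiableAt.comp z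
    ((hf.fderiv_right (m := 1) (by norm_num)).differentiableAt (by norm_num))

theorem ContDiffAt.deriv_deriv_line {f : F → G} {z : F} (hf : ContDiffAt ℝ 2 f z) (e : F) :
    deriv (deriv fun t : ℝ => f (z + t • e)) 0 = fderiv ℝ (fun y => fderiv ℝ f y e) z e := by
  have hcont : Tendsto (fun t : ℝ => z + t • e) (𝓝 0) (𝓝 z) := by
    simpa using (hasDerivAt_line z e 0).continuousAt.tendsto
  have hfirst : (deriv fun t : ℝ => f (z + t • e)) =ᶠ[𝓝 0] fun t => fderiv ℝ f (z + t • e) e :=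
    (hcont.eventually (hf.eventually (by simp))).mono fun t ht =>
      ((ht.differentiableAt (by norm_num)).hasFDerivAt.comp_hasDerivAt t
        (hasDerivAt_line z e t)).deriv
  rw [hfirst.deriv_eq]
  exact ((hf.differentiableAt_fderiv_apply e).hasFDerivAt.comp_hasDerivAt_of_eq (0 : ℝ)
    (hasDerivAt_line z e 0) (by simp)).deriv

end LineDeriv

theorem Bornology.IsBounded.compl_nonempty {F : Type*} [NormedAddCommGroup F] [NormedSpace ℝ F]
    [Nontrivial F] {s : Set F} (hs : Bornology.IsBounded s) : sᶜ.Nonempty :=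
  nonempty_compl.mpr fun h => NormedSpace.unbounded_univ ℝ F (h ▸ hs)

theorem hasDerivAt_const_sub_zpow (b : ℝ) (m : ℤ) {a : ℝ} (ha : b - a ≠ 0) :
    HasDerivAt (fun a => (b - a) ^ m) (-m * (b - a) ^ (m - 1)) a := by
  have := (hasDerivAt_zpow m (b - a) (Or.inl ha)).comp a ((hasDerivAt_id a).const_sub b)
  exact this.congr_deriv (by simp)

theorem mul_sub_le_rpow_sub_rpow {u v p : ℝ} (hv : 0 < v) (hvu : v ≤ u) (hp : 1 ≤ p) :
    v ^ (p - 1) * (u - v) ≤ u ^ p - v ^ p := by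
  have hu : 0 < u := hv.trans_le hvu
  have hpow : v ^ (p - 1) ≤ u ^ (p - 1) := by gcongr
  rw [show u ^ p = u ^ (p - 1) * u by rw [← rpow_add_one hu.ne']; ring_nf,
    show v ^ p = v ^ (p - 1) * v by rw [← rpow_add_one hv.ne']; ring_nf]
  nlinarith

theorem mul_rpow_sub_mul_lt {u v p A B : ℝ} (hv : 0 < v) (hvu : v < u) (hp : 1 ≤ p)
    (hA : 0 ≤ A) (hB : B < A * v ^ (p - 1)) : A * v ^ p - B * v < A * u ^ p - B * u := by
  have := mul_sub_le_rpow_sub_rpow hv hvu.le hp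
  have : B * (u - v) < A * v ^ (p - 1) * (u - v) := by gcongr
  nlinarith

theorem sq_le_pow_rpow {D p : ℝ} {β : ℕ} (hD : 1 ≤ D) (hβ : 2 ≤ β * (p - 1)) :
    D ^ 2 ≤ (D ^ β) ^ (p - 1) := by
  rw [← rpow_natCast_mul (by linarith), ← rpow_two]
  exact rpow_le_rpow_of_exponent_le hD hβ

def koExponent (p : ℝ) : ℕ :=
  ⌈2 / (p - 1)⌉₊

theorem two_le_koExponent_mul {p : ℝ} (hp : 1 < p) : 2 ≤ koExponent p * (p - 1) :=
  (div_le_iff₀ (by linarith)).mp (Nat.le_ceil _)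

theorem koExponent_ne_zero {p : ℝ} (hp : 1 < p) : koExponent p ≠ 0 := by
  intro h
  have := two_le_koExponent_mul hp
  rw [h] at this
  norm_num at this

theorem rpow_le_max_mul_rpow {r δ s : ℝ} (hr : 0 < r) (hδ : r / 2 ≤ δ) (hδ' : δ ≤ 3 / 2 * r) :
    δ ^ s ≤ max ((1 / 2) ^ s) ((3 / 2) ^ s) * r ^ s := by
  rcases le_total 0 s with hs | hs
  · calc δ ^ s ≤ (3 / 2 * r) ^ s := by gcongr; linarith
      _ ≤ _ := by rw [mul_rpow (by norm_num) hr.le]; gcongr; exact le_max_right _ _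
  · calc δ ^ s ≤ (1 / 2 * r) ^ s := rpow_le_rpow_of_nonpos (by positivity) (by linarith) hs
      _ ≤ _ := by rw [mul_rpow (by norm_num) hr.le]; gcongr; exact le_max_left _ _

theorem reaction_ge_of_comparable {r δ v μ s p : ℝ} (hr : 0 < r) (hδ : r / 2 ≤ δ)
    (hδ' : δ ≤ 3 / 2 * r) (hv : 0 ≤ v) :
    (max ((1 / 2) ^ s) ((3 / 2) ^ s) * r ^ s)⁻¹ * v ^ p - 4 * |μ| / r ^ 2 * v ≤
      v ^ p / δ ^ s - μ / δ ^ 2 * v := by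
  have hδ0 : 0 < δ := by linarith
  have hpow : (max ((1 / 2) ^ s) ((3 / 2) ^ s) * r ^ s)⁻¹ * v ^ p ≤ v ^ p / δ ^ s := by
    rw [inv_mul_eq_div]
    gcongr
    exact rpow_le_max_mul_rpow hr hδ hδ'
  have hμ : μ / δ ^ 2 ≤ 4 * |μ| / r ^ 2 :=
    calc μ / δ ^ 2 ≤ |μ| / (r / 2) ^ 2 := by gcongr; exact le_abs_self μ
      _ = 4 * |μ| / r ^ 2 := by field_simp; ring
  nlinarith [mul_le_mul_of_nonneg_right hμ hv]

section KellerOsserman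

variable {N : ℕ}

local notation "E" => EuclideanSpace ℝ (Fin N)

theorem IsLocalMax.lap_nonpos {f : E → ℝ} {z : E} (hmax : IsLocalMax f z)
    (hf : ContDiffAt ℝ 2 f z) : lap f z ≤ 0 := by
  refine Finset.sum_nonpos fun i _ => ?_
  rw [← hf.deriv_deriv_line]
  have hline := (hasDerivAt_line z (EuclideanSpace.single i 1) 0).continuousAt
  refine IsLocalMax.deriv_deriv_nonpos ?_ (hf.continuousAt.comp_of_eq hline (by simp))
  have hmax' : IsLocalMax f ((fun t : ℝ => z + t • EuclideanSpace.single i 1) 0) := by simpa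
  exact hmax'.comp_continuous (g := fun t : ℝ => z + t • EuclideanSpace.single i 1) hline

theorem lap_sub {u v : E → ℝ} {z : E} (hu : ContDiffAt ℝ 2 u z) (hv : ContDiffAt ℝ 2 v z) :
    lap (u - v) z = lap u z - lap v z := by
  rw [lap, lap, lap, ← Finset.sum_sub_distrib]
  refine Finset.sum_congr rfl fun i _ => ?_
  have hfirst : (fun y => fderiv ℝ (u - v) y (EuclideanSpace.single i 1)) =ᶠ[𝓝 z]
      (fun y => fderiv ℝ u y (EuclideanSpace.single i 1)) -
        fun y => fderiv ℝ v y (EuclideanSpace.single i 1) := by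
    filter_upwards [hu.eventually (by simp), hv.eventually (by simp)] with y huy hvy
    rw [fderiv_sub (huy.differentiableAt (by norm_num)) (hvy.differentiableAt (by norm_num))]
    rfl
  rw [hfirst.fderiv_eq, fderiv_sub (hu.differentiableAt_fderiv_apply _)
    (hv.differentiableAt_fderiv_apply _)]
  rfl

theorem le_of_lap_lt_of_le_off_compact {U K : Set E} {u v : E → ℝ} (hU : IsOpen U)
    (hK : IsCompact K) (hKU : K ⊆ U) (hu : ContDiffOn ℝ 2 u U) (hv : ContDiffOn ℝ 2 v U)
    (hout : ∀ y ∈ U \ K, u y ≤ v y) (hlap : ∀ z ∈ U, v z < u z → lap v z < lap u z)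
    {x : E} (hx : x ∈ U) : u x ≤ v x := by
  by_contra! hvu
  have hxK : x ∈ K := by_contra fun hxK => (hout x ⟨hx, hxK⟩).not_gt hvu
  obtain ⟨z, hzK, hzmax⟩ := hK.exists_isMaxOn ⟨x, hxK⟩ ((hu.sub hv).continuousOn.mono hKU)
  have hxz : u x - v x ≤ u z - v z := hzmax hxK
  have hzU := hKU hzK
  have hmax : IsLocalMax (u - v) z := by
    filter_upwards [hU.mem_nhds hzU] with y hy
    by_cases hyK : y ∈ K
    · exact hzmax hyK
    · simp only [Pi.sub_apply]
      linarith [hout y ⟨hy, hyK⟩]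
  have huz := hu.contDiffAt (hU.mem_nhds hzU)
  have hvz := hv.contDiffAt (hU.mem_nhds hzU)
  have hlap_le : lap u z - lap v z ≤ 0 := lap_sub huz hvz ▸ hmax.lap_nonpos (huz.sub hvz)
  linarith [hlap z hzU (by linarith)]

theorem hasFDerivAt_norm_sub_sq (x₀ y : E) :
    HasFDerivAt (fun y : E => ‖y - x₀‖ ^ 2) (2 • innerSL ℝ (y - x₀)) y := by
  simpa using ((hasFDerivAt_id y).sub_const x₀).norm_sq

theorem lap_comp_norm_sub_sq {g g' : ℝ → ℝ} {g'' : ℝ} {x₀ y : E}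
    (hg : ∀ᶠ a in 𝓝 (‖y - x₀‖ ^ 2), HasDerivAt g (g' a) a)
    (hg' : HasDerivAt g' g'' (‖y - x₀‖ ^ 2)) :
    lap (fun y => g (‖y - x₀‖ ^ 2)) y =
      2 * N * g' (‖y - x₀‖ ^ 2) + 4 * ‖y - x₀‖ ^ 2 * g'' := by
  have hq : Continuous fun y : E => ‖y - x₀‖ ^ 2 := by fun_prop
  have hpartial (i : Fin N) : (fun y' => fderiv ℝ (fun y => g (‖y - x₀‖ ^ 2)) y'
      (EuclideanSpace.single i 1)) =ᶠ[𝓝 y] fun y' => 2 * g' (‖y' - x₀‖ ^ 2) * (y' i - x₀ i) := by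
    filter_upwards [hq.continuousAt.eventually hg] with y' hy'
    have hcomp : HasFDerivAt (fun y => g (‖y - x₀‖ ^ 2)) _ y' :=
      hy'.comp_hasFDerivAt y' (hasFDerivAt_norm_sub_sq x₀ y')
    rw [hcomp.fderiv]
    simp [EuclideanSpace.inner_single_right]
    ring
  have hsecond (i : Fin N) : fderiv ℝ (fun y' => fderiv ℝ (fun y => g (‖y - x₀‖ ^ 2)) y'
      (EuclideanSpace.single i 1)) y (EuclideanSpace.single i 1) =
        4 * g'' * (y i - x₀ i) ^ 2 + 2 * g' (‖y - x₀‖ ^ 2) := by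
    rw [(hpartial i).fderiv_eq]
    have hlin : HasFDerivAt (fun y' : E => y' i - x₀ i) (EuclideanSpace.proj (𝕜 := ℝ) i) y :=
      (EuclideanSpace.proj (𝕜 := ℝ) i).hasFDerivAt.sub_const (x₀ i)
    have hprod : HasFDerivAt (fun y' => 2 * g' (‖y' - x₀‖ ^ 2) * (y' i - x₀ i)) _ y :=
      ((hg'.comp_hasFDerivAt y (hasFDerivAt_norm_sub_sq x₀ y)).const_mul 2).fun_mul hlin
    rw [hprod.fderiv]
    simp [EuclideanSpace.inner_single_right]
    ring
  rw [lap, Finset.sum_congr rfl fun i _ => hsecond i, Finset.sum_add_distrib, ← Finset.mul_sum,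
    EuclideanSpace.real_norm_sq_eq]
  simp
  ring

def barrierConst (N β : ℕ) : ℝ :=
  2 * β * N + 4 * β * (β + 1)

def barrier (x₀ : E) (R C : ℝ) (β : ℕ) (y : E) : ℝ :=
  C * (R ^ 2 - ‖y - x₀‖ ^ 2) ^ (-(β : ℤ))

section Barrier

variable {x₀ y : EuclideanSpace ℝ (Fin N)} {R C : ℝ} {β : ℕ}

theorem sub_norm_sub_sq_pos (hy : y ∈ ball x₀ R) : 0 < R ^ 2 - ‖y - x₀‖ ^ 2 := by
  rw [mem_ball, dist_eq_norm] at hy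
  nlinarith [norm_nonneg (y - x₀)]

theorem barrier_eq : barrier x₀ R C β y = C / (R ^ 2 - ‖y - x₀‖ ^ 2) ^ β := by
  rw [barrier, zpow_neg, zpow_natCast, div_eq_mul_inv]

theorem contDiffAt_barrier (hy : y ∈ ball x₀ R) : ContDiffAt ℝ 2 (barrier x₀ R C β) y := by
  have hw : ContDiffAt ℝ 2 (fun y : E => R ^ 2 - ‖y - x₀‖ ^ 2) y := by
    have : ContDiff ℝ 2 fun y : E => ‖y - x₀‖ ^ 2 :=
      (contDiff_norm_sq ℝ).comp (contDiff_id.sub contDiff_const)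
    exact contDiffAt_const.sub this.contDiffAt
  rw [show barrier x₀ R C β = _ from funext fun y => barrier_eq]
  exact contDiffAt_const.div (hw.pow β) (pow_ne_zero β (sub_norm_sub_sq_pos hy).ne')

theorem lap_barrier (hy : y ∈ ball x₀ R) :
    lap (barrier x₀ R C β) y = C * β * (2 * N * (R ^ 2 - ‖y - x₀‖ ^ 2) ^ (-(β : ℤ) - 1) +
      4 * (β + 1) * ‖y - x₀‖ ^ 2 * (R ^ 2 - ‖y - x₀‖ ^ 2) ^ (-(β : ℤ) - 2)) := by
  have hw := (sub_norm_sub_sq_pos hy).ne'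
  have hg : ∀ᶠ a in 𝓝 (‖y - x₀‖ ^ 2), HasDerivAt (fun a => C * (R ^ 2 - a) ^ (-(β : ℤ)))
      (C * β * (R ^ 2 - a) ^ (-(β : ℤ) - 1)) a := by
    filter_upwards [(continuousAt_const.sub continuousAt_id).eventually_ne hw] with a
      (ha : R ^ 2 - a ≠ 0)
    refine ((hasDerivAt_const_sub_zpow (R ^ 2) (-(β : ℤ)) ha).const_mul C).congr_deriv ?_
    push_cast
    ring
  have hg' : HasDerivAt (fun a => C * β * (R ^ 2 - a) ^ (-(β : ℤ) - 1))
      (C * β * (β + 1) * (R ^ 2 - ‖y - x₀‖ ^ 2) ^ (-(β : ℤ) - 2)) (‖y - x₀‖ ^ 2) := by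
    refine ((hasDerivAt_const_sub_zpow (R ^ 2) (-(β : ℤ) - 1) hw).const_mul
      (C * β)).congr_deriv ?_
    rw [show -(β : ℤ) - 1 - 1 = -(β : ℤ) - 2 by ring]
    push_cast
    ring
  rw [show barrier x₀ R C β = fun y => (fun a => C * (R ^ 2 - a) ^ (-(β : ℤ))) (‖y - x₀‖ ^ 2)
    from rfl, lap_comp_norm_sub_sq hg hg']
  ring

theorem lap_barrier_le (hC : 0 ≤ C) (hy : y ∈ ball x₀ R) :
    lap (barrier x₀ R C β) y ≤
      barrierConst N β * R ^ 2 / (R ^ 2 - ‖y - x₀‖ ^ 2) ^ 2 * barrier x₀ R C β y := by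
  have hw := sub_norm_sub_sq_pos hy
  set w := R ^ 2 - ‖y - x₀‖ ^ 2 with hw_def
  have hkey : 2 * N * w + 4 * (β + 1) * ‖y - x₀‖ ^ 2 ≤ (2 * N + 4 * (β + 1)) * R ^ 2 := by
    have hq : ‖y - x₀‖ ^ 2 ≤ R ^ 2 := by linarith
    have hwR : w ≤ R ^ 2 := by simp [w]
    rw [add_mul]
    gcongr
  have hlhs : lap (barrier x₀ R C β) y =
      C / w ^ β * β * (2 * N * w + 4 * (β + 1) * ‖y - x₀‖ ^ 2) / w ^ 2 := by
    rw [lap_barrier hy, ← hw_def, zpow_sub₀ hw.ne', zpow_sub₀ hw.ne', zpow_neg, zpow_natCast]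
    field_simp
  rw [hlhs, barrier_eq, ← hw_def, barrierConst]
  calc C / w ^ β * β * (2 * N * w + 4 * (β + 1) * ‖y - x₀‖ ^ 2) / w ^ 2
      ≤ C / w ^ β * β * ((2 * N + 4 * (β + 1)) * R ^ 2) / w ^ 2 := by gcongr
    _ = _ := by ring

theorem barrierConst_pos (hβ : β ≠ 0) : 0 < barrierConst N β := by
  have : (0 : ℝ) < β := by positivity
  unfold barrierConst
  positivity

theorem exists_barrier_gt (hC : 0 < C) (hβ : β ≠ 0) (M : ℝ) :
    ∃ η > 0, ∀ y ∈ ball x₀ R, R ^ 2 - ‖y - x₀‖ ^ 2 < η → M < barrier x₀ R C β y := by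
  refine ⟨min 1 (C / (|M| + 1)), by positivity, fun y hy hwη => ?_⟩
  have hw := sub_norm_sub_sq_pos hy
  have hwβ : (R ^ 2 - ‖y - x₀‖ ^ 2) ^ β < C / (|M| + 1) :=
    (pow_le_of_le_one hw.le (hwη.le.trans (min_le_left _ _)) hβ).trans_lt
      (hwη.trans_le (min_le_right _ _))
  rw [barrier_eq, lt_div_iff₀ (by positivity)]
  rw [lt_div_iff₀ (by positivity)] at hwβ
  nlinarith [le_abs_self M, pow_pos hw β]

end Barrier

theorem lap_barrier_lt {x₀ z : E} {R L A B p v : ℝ} {β : ℕ} (hp : 1 < p) (hB : 0 ≤ B)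
    (hL : 0 < L) (hβ : 2 ≤ β * (p - 1)) (hAL : A * L ^ (p - 1) = barrierConst N β / R ^ 2 + B)
    (hz : z ∈ ball x₀ R) (hv : barrier x₀ R (L * (R ^ 2) ^ β) β z < v) :
    lap (barrier x₀ R (L * (R ^ 2) ^ β) β) z < A * v ^ p - B * v := by
  set V := barrier x₀ R (L * (R ^ 2) ^ β) β
  have hR : 0 < R := pos_of_mem_ball hz
  have hβ0 : β ≠ 0 := by rintro rfl; norm_num at hβ
  have hC₀ : 0 < barrierConst N β / R ^ 2 := by have := barrierConst_pos (N := N) hβ0; positivity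
  have hA : 0 < A := by
    have := rpow_pos_of_pos hL (p - 1)
    nlinarith
  have hw := sub_norm_sub_sq_pos hz
  set D := R ^ 2 / (R ^ 2 - ‖z - x₀‖ ^ 2)
  have hD : 1 ≤ D := (one_le_div hw).mpr (by nlinarith [norm_nonneg (z - x₀)])
  have hD2 : 1 ≤ D ^ 2 := one_le_pow₀ hD
  have hVD : V z = L * D ^ β := by rw [show V z = _ from barrier_eq, div_pow, mul_div_assoc]
  have hV : 0 < V z := by rw [hVD]; positivity
  have hpow : (barrierConst N β / R ^ 2 + B) * D ^ 2 ≤ A * V z ^ (p - 1) := by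
    rw [hVD, mul_rpow hL.le (by positivity), ← mul_assoc, hAL]
    gcongr
    exact sq_le_pow_rpow hD hβ
  have hlapV : lap V z ≤ barrierConst N β / R ^ 2 * D ^ 2 * V z := by
    refine (lap_barrier_le (by positivity) hz).trans_eq ?_
    simp only [D, V]
    field_simp
  have hVp : V z ^ p = V z ^ (p - 1) * V z := by rw [← rpow_add_one hV.ne']; ring_nf
  calc lap V z ≤ barrierConst N β / R ^ 2 * D ^ 2 * V z := hlapV
    _ ≤ A * V z ^ p - B * V z := by
      rw [hVp]
      nlinarith [mul_le_mul_of_nonneg_right hpow hV.le, mul_nonneg hB hV.le]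
    _ < A * v ^ p - B * v := mul_rpow_sub_mul_lt hV hv hp.le hA.le (by nlinarith)

theorem le_of_lap_ge_on_ball {u : E → ℝ} {x₀ : E} {R A B p : ℝ} (hp : 1 < p) (hR : 0 < R)
    (hA : 0 < A) (hB : 0 ≤ B) (hu : ContDiffOn ℝ 2 u (closedBall x₀ R))
    (hlap : ∀ y ∈ ball x₀ R, A * u y ^ p - B * u y ≤ lap u y) :
    u x₀ ≤ ((barrierConst N (koExponent p) / R ^ 2 + B) / A) ^ (p - 1)⁻¹ := by
  set β := koExponent p
  have hβ : 2 ≤ β * (p - 1) := two_le_koExponent_mul hp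
  have hβ0 : β ≠ 0 := koExponent_ne_zero hp
  set L := ((barrierConst N β / R ^ 2 + B) / A) ^ (p - 1)⁻¹
  have hL : 0 < L := by have := barrierConst_pos (N := N) hβ0; positivity
  have hAL : A * L ^ (p - 1) = barrierConst N β / R ^ 2 + B := by
    rw [rpow_inv_rpow (by have := barrierConst_pos (N := N) hβ0; positivity) (by linarith)]
    field_simp
  set V := barrier x₀ R (L * (R ^ 2) ^ β) β
  have hVx₀ : V x₀ = L := by
    rw [show V x₀ = _ from barrier_eq, sub_self, norm_zero, zero_pow two_ne_zero, sub_zero]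
    field_simp
  obtain ⟨M, hM⟩ := (isCompact_closedBall x₀ R).bddAbove_image hu.continuousOn
  obtain ⟨η, hη, hVη⟩ :=
    exists_barrier_gt (x₀ := x₀) (R := R) (C := L * (R ^ 2) ^ β) (by positivity) hβ0 M
  set K := {y : E | η ≤ R ^ 2 - ‖y - x₀‖ ^ 2}
  have hKball : K ⊆ ball x₀ R := fun y (hy : η ≤ _) => by
    rw [mem_ball, dist_eq_norm, ← sq_lt_sq₀ (norm_nonneg _) hR.le]
    linarith
  have hK : IsCompact K :=
    isCompact_of_isClosed_isBounded (isClosed_le continuous_const (by fun_prop))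
      (isBounded_ball.subset hKball)
  rw [← hVx₀]
  refine le_of_lap_lt_of_le_off_compact isOpen_ball hK hKball
    (hu.mono ball_subset_closedBall) (fun y hy => (contDiffAt_barrier hy).contDiffWithinAt)
    (fun y ⟨hy, hyK⟩ => ?_) (fun z hz hVu => (lap_barrier_lt hp hB hL hβ hAL hz hVu).trans_le
      (hlap z hz)) (mem_ball_self hR)
  exact (hM ⟨y, ball_subset_closedBall hy, rfl⟩).trans (hVη y hy (not_le.mp hyK)).le

section Collar

variable {Ω : Set (EuclideanSpace ℝ (Fin N))} {x : EuclideanSpace ℝ (Fin N)}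

theorem bdist_pos (hΩ : IsOpen Ω) (hΩc : Ωᶜ.Nonempty) (hx : x ∈ Ω) : 0 < bdist Ω x :=
  (hΩ.isClosed_compl.notMem_iff_infDist_pos hΩc).mp (not_not_intro hx)

theorem mem_of_bdist_pos (h : 0 < bdist Ω x) : x ∈ Ω := by
  by_contra hx
  exact h.ne' (infDist_zero_of_mem hx)

theorem abs_bdist_sub_bdist_le (x y : EuclideanSpace ℝ (Fin N)) :
    |bdist Ω y - bdist Ω x| ≤ dist y x := by
  simpa [bdist, Real.dist_eq] using lipschitz_infDist_pt (Ωᶜ) |>.dist_le_mul y x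

theorem closedBall_subset_collar {t ρ : ℝ} (ht : t < 1) (hx : 0 < bdist Ω x)
    (hρ : (1 + t) * bdist Ω x < ρ) : closedBall x (t * bdist Ω x) ⊆ collar Ω ρ := by
  intro y hy
  have := abs_le.mp ((abs_bdist_sub_bdist_le (Ω := Ω) x y).trans (mem_closedBall.mp hy))
  exact ⟨mem_of_bdist_pos (by nlinarith), by linarith⟩

end Collar

def koConst (N : ℕ) (μ s p t : ℝ) : ℝ :=
  ((barrierConst N (koExponent p) / t ^ 2 + 4 * |μ|) * max ((1 / 2) ^ s) ((3 / 2) ^ s)) ^ (p - 1)⁻¹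

theorem koConst_pos {μ s p t : ℝ} (hp : 1 < p) (ht : 0 < t) : 0 < koConst N μ s p t := by
  have := barrierConst_pos (N := N) (koExponent_ne_zero hp)
  have : 0 < max ((1 / 2 : ℝ) ^ s) ((3 / 2) ^ s) := lt_max_of_lt_left (by positivity)
  unfold koConst
  positivity

section SubSol

variable {Ω : Set (EuclideanSpace ℝ (Fin N))} {μ s p : ℝ} {u : EuclideanSpace ℝ (Fin N) → ℝ}

theorem SubSol.mono {G G' : Set (EuclideanSpace ℝ (Fin N))} (hu : SubSol Ω μ s p G u)
    (hG : G' ⊆ G) : SubSol Ω μ s p G' u :=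
  ⟨hu.1.mono hG, fun x hx => hu.2.1 x (hG hx), fun x hx => hu.2.2 x (hG hx)⟩

theorem SubSol.le_koConst_mul_bdist_rpow {x₀ : EuclideanSpace ℝ (Fin N)} {t : ℝ} (hp : 1 < p)
    (ht : 0 < t) (ht' : t ≤ 1 / 2) (hx₀ : 0 < bdist Ω x₀)
    (hu : SubSol Ω μ s p (closedBall x₀ (t * bdist Ω x₀)) u) :
    u x₀ ≤ koConst N μ s p t * bdist Ω x₀ ^ ((s - 2) / (p - 1)) := by
  set r := bdist Ω x₀
  set Ms := max ((1 / 2 : ℝ) ^ s) ((3 / 2) ^ s)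
  have hMs : 0 < Ms := lt_max_of_lt_left (by positivity)
  have hlap (y) (hy : y ∈ ball x₀ (t * r)) :
      (Ms * r ^ s)⁻¹ * u y ^ p - 4 * |μ| / r ^ 2 * u y ≤ lap u y := by
    have hδ := abs_le.mp ((abs_bdist_sub_bdist_le (Ω := Ω) x₀ y).trans (mem_ball.mp hy).le)
    have hsub := hu.2.2 y (ball_subset_closedBall hy)
    have hreact := reaction_ge_of_comparable (μ := μ) (s := s) (p := p) (δ := bdist Ω y) hx₀
      (by nlinarith) (by nlinarith) (hu.2.1 y (ball_subset_closedBall hy))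
    linarith
  refine (le_of_lap_ge_on_ball hp (by positivity) (by positivity) (by positivity) hu.1
    hlap).trans_eq ?_
  have hinner : (barrierConst N (koExponent p) / (t * r) ^ 2 + 4 * |μ| / r ^ 2) / (Ms * r ^ s)⁻¹
      = (barrierConst N (koExponent p) / t ^ 2 + 4 * |μ|) * Ms * r ^ (s - 2) := by
    rw [rpow_sub hx₀, rpow_two]
    field_simp
  have := barrierConst_pos (N := N) (koExponent_ne_zero hp)
  rw [hinner, mul_rpow (by positivity) (by positivity), ← rpow_mul hx₀.le, ← div_eq_mul_inv,
    koConst]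

end SubSol

end KellerOsserman

theorem stmt12_general {N : ℕ} (hN : 2 ≤ N) (Ω : Set (EuclideanSpace ℝ (Fin N)))
    (hΩo : IsOpen Ω) (hΩb : Bornology.IsBounded Ω)
    (μ s p : ℝ) (hp : 1 < p) :
    (∀ ρ, 0 < ρ → ∀ u : EuclideanSpace ℝ (Fin N) → ℝ, SubSol Ω μ s p (collar Ω ρ) u →
      ∀ ρ', 0 < ρ' → ρ' < ρ →
        ∃ γ, 0 < γ ∧ ∀ x ∈ collar Ω ρ', u x ≤ γ * bdist Ω x ^ ((s - 2) / (p - 1))) ∧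
    (∃ γ, 0 < γ ∧ ∀ u : EuclideanSpace ℝ (Fin N) → ℝ, SubSol Ω μ s p Ω u →
      ∀ x ∈ Ω, u x ≤ γ * bdist Ω x ^ ((s - 2) / (p - 1))) := by
  have : Nonempty (Fin N) := ⟨⟨0, by omega⟩⟩
  have hδ {x} (hx : x ∈ Ω) : 0 < bdist Ω x := bdist_pos hΩo hΩb.compl_nonempty hx
  constructor
  · intro ρ hρ u hu ρ' hρ' hρ'ρ
    set t := min (1 / 2) ((ρ - ρ') / ρ')
    have ht : 0 < t := lt_min (by norm_num) (div_pos (by linarith) hρ')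
    have ht' : t ≤ 1 / 2 := min_le_left _ _
    have htρ : t * ρ' ≤ ρ - ρ' := (le_div_iff₀ hρ').mp (min_le_right _ _)
    refine ⟨koConst N μ s p t, koConst_pos hp ht, fun x ⟨hxΩ, hxρ'⟩ => ?_⟩
    have hball : closedBall x (t * bdist Ω x) ⊆ collar Ω ρ :=
      closedBall_subset_collar (by linarith) (hδ hxΩ) (by nlinarith)
    exact (hu.mono hball).le_koConst_mul_bdist_rpow hp ht ht' (hδ hxΩ)
  · refine ⟨koConst N μ s p (1 / 2), koConst_pos hp (by norm_num), fun u hu x hx => ?_⟩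
    have hball : closedBall x (1 / 2 * bdist Ω x) ⊆ Ω :=
      (closedBall_subset_collar (ρ := 2 * bdist Ω x) (by norm_num) (hδ hx)
        (by linarith [hδ hx])).trans (sep_subset _ _)
    exact (hu.mono hball).le_koConst_mul_bdist_rpow hp (by norm_num) le_rfl (hδ hx)

/-- (Keller–Osserman bound.) Let `μ, s ∈ ℝ`, `p > 1`, and let `(d, c)`
be a regularized distance on `Ω`. If `u` is a sub-solution of `(*)` on `Ω_ρ`, then for
every `ρ' ∈ (0, ρ)` there is `γ⋆ > 0` (depending on `u`) with
`u ≤ γ⋆·δ^{(s-2)/(p-1)}` on `Ω_{ρ'}`. If `u` is a sub-solution on all of `Ω`, then `γ⋆`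
can be chosen independently of `u`. -/
theorem stmt12 {N : ℕ} (hN : 2 ≤ N) (Ω : Set (EuclideanSpace ℝ (Fin N)))
    (hΩo : IsOpen Ω) (hΩne : Ω.Nonempty) (hΩb : Bornology.IsBounded Ω)
    (μ s p : ℝ) (hp : 1 < p)
    (d : EuclideanSpace ℝ (Fin N) → ℝ) (c : ℝ) (hd : RegDist Ω d c) :
    (∀ ρ, 0 < ρ → ∀ u : EuclideanSpace ℝ (Fin N) → ℝ, SubSol Ω μ s p (collar Ω ρ) u →
      ∀ ρ', 0 < ρ' → ρ' < ρ →
        ∃ γ, 0 < γ ∧ ∀ x ∈ collar Ω ρ', u x ≤ γ * bdist Ω x ^ ((s - 2) / (p - 1))) ∧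
    (∃ γ, 0 < γ ∧ ∀ u : EuclideanSpace ℝ (Fin N) → ℝ, SubSol Ω μ s p Ω u →
      ∀ x ∈ Ω, u x ≤ γ * bdist Ω x ^ ((s - 2) / (p - 1))) :=
  stmt12_general hN Ω hΩo hΩb μ s p hp
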